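/- Uniqueness of extraction outcome among legitimate users: for any two legitimate users u_i and u_j with distinct shares (x_i, f(x_i)) and (x_j, f(x_j)) on the same degree-≤t polynomial p over Z_Q, both disjoint from the server's t node points, the extraction procedure yields the same secret tau for both users. -/

import Mathlib

/-!
Raising `g` of order `Q` to `a.val` turns `ZMod Q` arithmetic in the exponent into
multiplication in the group, so the user's product of Lagrange-weighted shares is
`g ^ (r * Σ_k p(x_k) λ_k).val`. By Lagrange interpolation on any `t + 1` distinct nodes the
exponent is `r * p(0)`, which does not depend on the user's own node.
-/

open Finset Polynomial

/-- The Lagrangian coefficient at 0 of node `x k` with respect to the node family `x`. -/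
def lagCoeff {Q n : ℕ} [Fact Q.Prime] (x : Fin n → ZMod Q) (k : Fin n) : ZMod Q :=
  ∏ j ∈ Finset.univ.erase k, x j / (x j - x k)

section PowVal

variable {n : ℕ} {G : Type*} [CommGroup G] {g : G}

lemma pow_val_add [NeZero n] (hg : orderOf g = n) (a b : ZMod n) :
    g ^ (a + b).val = g ^ a.val * g ^ b.val := by
  rw [← pow_add, pow_eq_pow_iff_modEq, hg, ZMod.val_add]
  exact Nat.mod_modEq _ _

lemma pow_val_pow_val (hg : orderOf g = n) (a b : ZMod n) :
    (g ^ a.val) ^ b.val = g ^ (a * b).val := by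
  rw [← pow_mul, pow_eq_pow_iff_modEq, hg, ZMod.val_mul]
  exact (Nat.mod_modEq _ _).symm

lemma pow_val_sum [NeZero n] (hg : orderOf g = n) {ι : Type*} (s : Finset ι) (f : ι → ZMod n) :
    g ^ (∑ i ∈ s, f i).val = ∏ i ∈ s, g ^ (f i).val := by
  classical
  induction s using Finset.induction with
  | empty => simp
  | insert a s has ih => rw [sum_insert has, prod_insert has, pow_val_add hg, ih]

end PowVal

section Interpolation

variable {Q : ℕ} [Fact Q.Prime]

lemma eval_basis_zero {n : ℕ} (v : Fin n → ZMod Q) (k : Fin n) :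
    (Lagrange.basis univ v k).eval 0 = lagCoeff v k := by
  rw [Lagrange.basis, eval_prod, lagCoeff]
  refine prod_congr rfl fun j _ => ?_
  rw [Lagrange.basisDivisor, eval_mul, eval_C, eval_sub, eval_X, eval_C, div_eq_mul_inv,
    ← neg_sub (v j) (v k), inv_neg]
  ring

lemma sum_eval_mul_lagCoeff {n : ℕ} (p : (ZMod Q)[X]) (hdeg : p.degree < n)
    (v : Fin n → ZMod Q) (hv : Function.Injective v) :
    ∑ k, p.eval (v k) * lagCoeff v k = p.eval 0 := by
  have hdeg' : p.degree < (#(univ : Finset (Fin n)) : ℕ) := by simpa using hdeg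
  conv_rhs => rw [Lagrange.eq_interpolate hv.injOn hdeg']
  simp only [Lagrange.interpolate_apply, eval_finsetSum, eval_mul, eval_C, eval_basis_zero]

lemma extraction_eq {G : Type*} [CommGroup G] {g : G} (hg : orderOf g = Q) {t : ℕ}
    (p : (ZMod Q)[X]) (hdeg : p.degree ≤ t) (x : Fin t → ZMod Q) (u r : ZMod Q)
    (hinj : Function.Injective (Fin.snoc x u : Fin (t + 1) → ZMod Q)) :
    (∏ k : Fin t, (g ^ (r * p.eval (x k)).val) ^
        (lagCoeff (Fin.snoc x u : Fin (t + 1) → ZMod Q) k.castSucc).val) *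
      (g ^ r.val) ^ (p.eval u * lagCoeff (Fin.snoc x u : Fin (t + 1) → ZMod Q) (Fin.last t)).val
      = g ^ (r * p.eval 0).val := by
  set v : Fin (t + 1) → ZMod Q := Fin.snoc x u
  have hdeg' : p.degree < (t + 1 : ℕ) :=
    hdeg.trans_lt (by exact_mod_cast Nat.lt_succ_self t)
  have hexp : r * p.eval 0 = ∑ k, r * (p.eval (v k) * lagCoeff v k) := by
    rw [← mul_sum, sum_eval_mul_lagCoeff p hdeg' v hinj]
  rw [hexp, pow_val_sum hg, Fin.prod_univ_castSucc]
  simp only [pow_val_pow_val hg, v, Fin.snoc_castSucc, Fin.snoc_last, mul_assoc]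

end Interpolation

theorem stmt_19_general (Q P t : ℕ) [Fact Q.Prime]
    (g : (ZMod P)ˣ) (hg : orderOf g = Q)
    (p : Polynomial (ZMod Q)) (hdeg : p.degree ≤ (t : ℕ))
    (x : Fin t → ZMod Q)
    (xi xj : ZMod Q)
    (hinj_i : Function.Injective (Fin.snoc x xi : Fin (t + 1) → ZMod Q))
    (hinj_j : Function.Injective (Fin.snoc x xj : Fin (t + 1) → ZMod Q))
    (r : ZMod Q)
    (γ : (ZMod P)ˣ) :
    γ / ((∏ k : Fin t,
            (g ^ (r * p.eval (x k)).val) ^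
              (lagCoeff (Fin.snoc x xi : Fin (t + 1) → ZMod Q) k.castSucc).val) *
          (g ^ r.val) ^
            (p.eval xi * lagCoeff (Fin.snoc x xi : Fin (t + 1) → ZMod Q) (Fin.last t)).val)
      = γ / ((∏ k : Fin t,
            (g ^ (r * p.eval (x k)).val) ^
              (lagCoeff (Fin.snoc x xj : Fin (t + 1) → ZMod Q) k.castSucc).val) *
          (g ^ r.val) ^
            (p.eval xj * lagCoeff (Fin.snoc x xj : Fin (t + 1) → ZMod Q) (Fin.last t)).val) := by
  rw [extraction_eq hg p hdeg x xi r hinj_i, extraction_eq hg p hdeg x xj r hinj_j]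

/-- any two legitimate users `u_i` (node `xi`) and `u_j` (node `xj`),
whose shares lie on the same polynomial `p` and are disjoint from the server's `t`
nodes `x`, extract the same secret.  The node family of a user with node `u` is
`Fin.snoc x u`. -/
theorem stmt_19 (Q P t : ℕ) [Fact Q.Prime] (hP : P.Prime) (hPQ : P = 2 * Q + 1)
    (g : (ZMod P)ˣ) (hg : orderOf g = Q)
    (p : Polynomial (ZMod Q)) (hdeg : p.degree ≤ (t : ℕ))
    (x : Fin t → ZMod Q) (hnz : ∀ k, x k ≠ 0)
    (xi xj : ZMod Q) (hij : xi ≠ xj) (hxi : xi ≠ 0) (hxj : xj ≠ 0)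
    (hinj_i : Function.Injective (Fin.snoc x xi : Fin (t + 1) → ZMod Q))
    (hinj_j : Function.Injective (Fin.snoc x xj : Fin (t + 1) → ZMod Q))
    (r : ZMod Q) (τ : (ZMod P)ˣ) (hτ : τ ∈ Subgroup.zpowers g)
    (γ : (ZMod P)ˣ) (hγ : γ = τ * g ^ (r * p.coeff 0).val) :
    γ / ((∏ k : Fin t,
            (g ^ (r * p.eval (x k)).val) ^
              (lagCoeff (Fin.snoc x xi : Fin (t + 1) → ZMod Q) k.castSucc).val) *
          (g ^ r.val) ^
            (p.eval xi * lagCoeff (Fin.snoc x xi : Fin (t + 1) → ZMod Q) (Fin.last t)).val)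
      = γ / ((∏ k : Fin t,
            (g ^ (r * p.eval (x k)).val) ^
              (lagCoeff (Fin.snoc x xj : Fin (t + 1) → ZMod Q) k.castSucc).val) *
          (g ^ r.val) ^
            (p.eval xj * lagCoeff (Fin.snoc x xj : Fin (t + 1) → ZMod Q) (Fin.last t)).val) :=
  stmt_19_general Q P t g hg p hdeg x xi xj hinj_i hinj_j r γ
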